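/- Let n ≥ 1, K ≥ 1, let A_1, …, A_K ∈ ℂ^{n×n} be Hermitian matrices, and let P ≥ 0. Then the supremum of Σ_{j=1}^K w_j^* A_j w_j over all families (w_1, …, w_K) in ℂ^n with Σ_{j=1}^K ‖w_j‖² ≤ P equals P·max(0, max_j λmax(A_j)). Moreover, this supremum is attained by a family in which at most one vector w_j is nonzero: if j* maximizes λmax(A_j) and λmax(A_{j*}) > 0, take w_{j*} = √P·x with x a unit eigenvector for λmax(A_{j*}) and w_j = 0 for j ≠ j*; otherwise take all w_j = 0. -/

import Mathlib

open Matrix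

/-- The largest eigenvalue of a Hermitian matrix. -/
noncomputable def lamMax {n : ℕ} {A : Matrix (Fin n) (Fin n) ℂ}
    (hA : A.IsHermitian) : ℝ :=
  ⨆ i, hA.eigenvalues i

/-!
Diagonalizing `A` in an orthonormal eigenbasis `(vᵢ)` gives `w^* A w = Σᵢ λᵢ |⟨vᵢ, w⟩|²`,
and by Parseval `Σᵢ |⟨vᵢ, w⟩|² = ‖w‖²`, so `w^* A w ≤ λmax(A) ‖w‖²`. Summing over the blocks
bounds the objective by `max(0, maxⱼ λmax(Aⱼ))` times the total power, hence by
`P · max(0, maxⱼ λmax(Aⱼ))`. If the maximal eigenvalue is positive, the bound is attained by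
spending the whole budget on a unit top eigenvector of the best block; otherwise the zero family
attains it.
-/

open WithLp

namespace Matrix.IsHermitian

variable {𝕜 ι : Type*} [RCLike 𝕜] [Fintype ι] [DecidableEq ι] {A : Matrix ι ι 𝕜}

lemma inner_eigenvectorBasis_mulVec (hA : A.IsHermitian) (i : ι) (w : ι → 𝕜) :
    inner 𝕜 (hA.eigenvectorBasis i) (toLp 2 (A *ᵥ w))
      = hA.eigenvalues i * inner 𝕜 (hA.eigenvectorBasis i) (toLp 2 w) := by
  have hT := isSymmetric_toEuclideanLin_iff.mpr hA
  rw [show toLp 2 (A *ᵥ w) = A.toEuclideanLin (toLp 2 w) from rfl, ← hT, toLpLin_apply,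
    mulVec_eigenvectorBasis, WithLp.toLp_smul, toLp_ofLp,
    RCLike.real_smul_eq_coe_smul (K := 𝕜), inner_smul_real_left, RCLike.real_smul_eq_coe_mul]

lemma re_star_dotProduct_mulVec_eq_sum (hA : A.IsHermitian) (w : ι → 𝕜) :
    RCLike.re (star w ⬝ᵥ A *ᵥ w)
      = ∑ i, hA.eigenvalues i * ‖inner 𝕜 (hA.eigenvectorBasis i) (toLp 2 w)‖ ^ 2 := by
  rw [dotProduct_comm, ← EuclideanSpace.inner_toLp_toLp,
    ← hA.eigenvectorBasis.sum_inner_mul_inner, map_sum]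
  refine Finset.sum_congr rfl fun i _ => ?_
  rw [inner_eigenvectorBasis_mulVec, mul_left_comm, ← inner_conj_symm, RCLike.conj_mul,
    ← RCLike.ofReal_pow, ← RCLike.ofReal_mul, RCLike.ofReal_re]

lemma re_star_dotProduct_mulVec_le (hA : A.IsHermitian) {c : ℝ}
    (hc : ∀ i, hA.eigenvalues i ≤ c) (w : ι → 𝕜) :
    RCLike.re (star w ⬝ᵥ A *ᵥ w) ≤ c * ∑ i, ‖w i‖ ^ 2 := by
  rw [hA.re_star_dotProduct_mulVec_eq_sum, ← EuclideanSpace.norm_sq_eq (toLp 2 w),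
    ← hA.eigenvectorBasis.sum_sq_norm_inner_right, Finset.mul_sum]
  exact Finset.sum_le_sum fun i _ => mul_le_mul_of_nonneg_right (hc i) (by positivity)

end Matrix.IsHermitian

section LargestEigenvalue

variable {n : ℕ} {A : Matrix (Fin n) (Fin n) ℂ}

lemma eigenvalues_le_lamMax (hA : A.IsHermitian) (i : Fin n) :
    hA.eigenvalues i ≤ lamMax hA :=
  le_ciSup (Set.finite_range _).bddAbove i

lemma re_star_dotProduct_mulVec_le_lamMax (hA : A.IsHermitian) (w : Fin n → ℂ) :
    (star w ⬝ᵥ A *ᵥ w).re ≤ lamMax hA * ∑ i, ‖w i‖ ^ 2 :=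
  hA.re_star_dotProduct_mulVec_le (eigenvalues_le_lamMax hA) w

lemma exists_re_star_dotProduct_mulVec_eq_lamMax [Nonempty (Fin n)] (hA : A.IsHermitian)
    {P : ℝ} (hP : 0 ≤ P) :
    ∃ v : Fin n → ℂ, ∑ i, ‖v i‖ ^ 2 = P ∧ (star v ⬝ᵥ A *ᵥ v).re = P * lamMax hA := by
  obtain ⟨i, hi⟩ : ∃ i, hA.eigenvalues i = lamMax hA := exists_eq_ciSup_of_finite
  refine ⟨(√P : ℂ) • ⇑(hA.eigenvectorBasis i), ?_, ?_⟩
  · rw [← EuclideanSpace.norm_sq_eq (toLp 2 _), WithLp.toLp_smul, toLp_ofLp, norm_smul,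
      hA.eigenvectorBasis.orthonormal.1 i, Complex.norm_real,
      Real.norm_of_nonneg (Real.sqrt_nonneg P), mul_one, Real.sq_sqrt hP]
  · rw [mulVec_smul, star_smul, smul_dotProduct, dotProduct_smul, smul_smul, smul_eq_mul,
      Complex.star_def, Complex.conj_ofReal, ← Complex.ofReal_mul, Real.mul_self_sqrt hP,
      Complex.re_ofReal_mul, ← hi, hA.eigenvalues_eq]
    rfl

end LargestEigenvalue

section BlockFamily

variable {κ : Type*} [Fintype κ] {n : ℕ} {A : κ → Matrix (Fin n) (Fin n) ℂ}

lemma sum_re_star_dotProduct_mulVec_le (hA : ∀ j, (A j).IsHermitian) {M P : ℝ}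
    (hM₀ : 0 ≤ M) (hM : ∀ j, lamMax (hA j) ≤ M) (w : κ → Fin n → ℂ)
    (hw : ∑ j, ∑ i, ‖w j i‖ ^ 2 ≤ P) :
    ∑ j, (star (w j) ⬝ᵥ A j *ᵥ w j).re ≤ P * M :=
  calc ∑ j, (star (w j) ⬝ᵥ A j *ᵥ w j).re
      ≤ ∑ j, M * ∑ i, ‖w j i‖ ^ 2 := Finset.sum_le_sum fun j _ =>
        (re_star_dotProduct_mulVec_le_lamMax (hA j) (w j)).trans
          (mul_le_mul_of_nonneg_right (hM j) (by positivity))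
    _ = M * ∑ j, ∑ i, ‖w j i‖ ^ 2 := (Finset.mul_sum ..).symm
    _ ≤ M * P := mul_le_mul_of_nonneg_left hw hM₀
    _ = P * M := mul_comm ..

lemma exists_single_sum_re_star_dotProduct_mulVec_eq_lamMax [DecidableEq κ]
    [Nonempty (Fin n)] (hA : ∀ j, (A j).IsHermitian) (j₀ : κ) {P : ℝ} (hP : 0 ≤ P) :
    ∃ w : κ → Fin n → ℂ, ∑ j, ∑ i, ‖w j i‖ ^ 2 = P ∧
      ∑ j, (star (w j) ⬝ᵥ A j *ᵥ w j).re = P * lamMax (hA j₀) ∧ ∀ j, j ≠ j₀ → w j = 0 := by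
  obtain ⟨v, hvP, hv⟩ := exists_re_star_dotProduct_mulVec_eq_lamMax (hA j₀) hP
  refine ⟨Pi.single j₀ v, ?_, ?_, fun j hj => by simp [hj]⟩ <;>
    rwa [Fintype.sum_eq_single j₀ fun j hj => by simp [Pi.single_eq_of_ne hj],
      Pi.single_eq_same]

end BlockFamily

/-- Optimality of the per-cell DBF solution: the supremum of
`Σ_j w_j^* A_j w_j` over families with total power `Σ_j ‖w_j‖² ≤ P` equals
`P · max 0 (max_j λmax (A_j))`, and it is attained by a family in which
at most one vector is nonzero. -/
theorem sup_sum_quadratic_forms (n K : ℕ) (hn : 1 ≤ n) (hK : 1 ≤ K)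
    (A : Fin K → Matrix (Fin n) (Fin n) ℂ) (hA : ∀ j, (A j).IsHermitian)
    (P : ℝ) (hP : 0 ≤ P) :
    IsGreatest {r : ℝ | ∃ w : Fin K → Fin n → ℂ,
        (∑ j, ∑ i, ‖w j i‖ ^ 2) ≤ P ∧
        r = ∑ j, (star (w j) ⬝ᵥ (A j).mulVec (w j)).re}
      (P * max 0 (⨆ j, lamMax (hA j))) ∧
    ∃ w : Fin K → Fin n → ℂ,
      (∑ j, ∑ i, ‖w j i‖ ^ 2) ≤ P ∧
      (∑ j, (star (w j) ⬝ᵥ (A j).mulVec (w j)).re)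
        = P * max 0 (⨆ j, lamMax (hA j)) ∧
      ∃ j₀ : Fin K, ∀ j, j ≠ j₀ → w j = 0 := by
  have : Nonempty (Fin n) := ⟨⟨0, hn⟩⟩
  have : Nonempty (Fin K) := ⟨⟨0, hK⟩⟩
  set L := ⨆ j, lamMax (hA j)
  have hle : ∀ j, lamMax (hA j) ≤ max 0 L := fun j =>
    (le_ciSup (Set.finite_range fun j => lamMax (hA j)).bddAbove j).trans (le_max_right _ _)
  obtain ⟨w, hwP, hwL, j₀, hw⟩ : ∃ w : Fin K → Fin n → ℂ, ∑ j, ∑ i, ‖w j i‖ ^ 2 ≤ P ∧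
      ∑ j, (star (w j) ⬝ᵥ A j *ᵥ w j).re = P * max 0 L ∧ ∃ j₀, ∀ j, j ≠ j₀ → w j = 0 := by
    rcases le_or_gt L 0 with hL | hL
    · exact ⟨0, by simpa using hP, by simp [max_eq_left hL], ⟨0, hK⟩, fun _ _ => rfl⟩
    · obtain ⟨j₀, hj₀⟩ : ∃ j, lamMax (hA j) = L := exists_eq_ciSup_of_finite
      obtain ⟨w, hwP, hwL, hw⟩ :=
        exists_single_sum_re_star_dotProduct_mulVec_eq_lamMax hA j₀ hP
      exact ⟨w, hwP.le, by rw [hwL, hj₀, max_eq_right hL.le], j₀, hw⟩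
  refine ⟨⟨⟨w, hwP, hwL.symm⟩, ?_⟩, w, hwP, hwL, j₀, hw⟩
  rintro r ⟨w', hw'P, rfl⟩
  exact sum_re_star_dotProduct_mulVec_le hA (le_max_left _ _) hle w' hw'P
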